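/- arXiv:1104.4263 — 3 statements merged into one kernel-verified Lean document; each statement's English description precedes it below -/
import Mathlib

section
/- Let n ≥ 1, let G be an n×n complex matrix, let ε and ε_b be nonzero complex numbers, and set χ = ε/ε_b − 1, χ' = ε_b/ε − 1, A = I − χG and A_R = I − χ'G. Then the spectrum of A_R·A equals the image of the spectrum of A under the map λ ↦ (1 + (ε_b/ε)·(1 − λ))·λ. -/
open Polynomial

theorem spectrum_regularized_system (n : ℕ) (hn : 1 ≤ n) (G : Matrix (Fin n) (Fin n) ℂ)
    (ε εb : ℂ) (hε : ε ≠ 0) (hεb : εb ≠ 0) :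
    spectrum ℂ
        (((1 : Matrix (Fin n) (Fin n) ℂ) - (εb / ε - 1) • G) *
          ((1 : Matrix (Fin n) (Fin n) ℂ) - (ε / εb - 1) • G))
      = (fun lam : ℂ => (1 + (εb / ε) * (1 - lam)) * lam) ''
          spectrum ℂ ((1 : Matrix (Fin n) (Fin n) ℂ) - (ε / εb - 1) • G) := by
  haveI : NeZero n := ⟨by omega⟩
  set c : ℂ := εb / ε with hc
  set A : Matrix (Fin n) (Fin n) ℂ := 1 - (ε / εb - 1) • G with hA
  set p : ℂ[X] := (C (1 + c) - C c * X) * X with hp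
  have key : ((1 : Matrix (Fin n) (Fin n) ℂ) - (εb / ε - 1) • G) * A = aeval A p := by
    rw [hp]
    simp only [map_mul, map_sub, map_add, aeval_X, aeval_C, map_one]
    have hAR : (1 : Matrix (Fin n) (Fin n) ℂ) - (εb / ε - 1) • G
        = 1 + algebraMap ℂ (Matrix (Fin n) (Fin n) ℂ) c - algebraMap ℂ (Matrix (Fin n) (Fin n) ℂ) c * A := by
      rw [hA, Algebra.algebraMap_eq_smul_one]
      rw [smul_mul_assoc, one_mul, smul_sub, smul_smul]
      have h1 : c * (ε / εb - 1) = 1 - c := by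
        rw [hc]; field_simp
      rw [h1, ← hc]
      module
    rw [hAR]
  have hnon : (spectrum ℂ A).Nonempty :=
    spectrum.nonempty_of_isAlgClosed_of_finiteDimensional ℂ A
  rw [key, spectrum.map_polynomial_aeval_of_nonempty A p hnon]
  apply Set.image_congr
  intro k _
  rw [hp]
  simp only [eval_mul, eval_sub, eval_add, eval_C, eval_X]
  ring
end

section
/- Let A be an n×n complex matrix, V an n×r complex matrix with orthonormal columns (Vᴴ·V = I_r), and T an invertible r×r complex matrix such that A·V = V·T (the columns of V span an A-invariant subspace). Define P⁻¹ = I_n + V·(T⁻¹ − I_r)·Vᴴ. Then A·P⁻¹·V = V; in particular every nonzero column of V is an eigenvector of A·P⁻¹ with eigenvalue 1. -/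
theorem deflated_eigenvalues_moved_to_one (n r : ℕ)
    (A : Matrix (Fin n) (Fin n) ℂ) (V : Matrix (Fin n) (Fin r) ℂ)
    (hV : V.conjTranspose * V = 1)
    (T : Matrix (Fin r) (Fin r) ℂ) (hT : IsUnit T)
    (hAV : A * V = V * T) :
    A * ((1 : Matrix (Fin n) (Fin n) ℂ) + V * (T⁻¹ - 1) * V.conjTranspose) * V = V ∧
    ∀ j : Fin r, (fun i => V i j) ≠ 0 →
      Module.End.HasEigenvector
        (Matrix.mulVecLin
          (A * ((1 : Matrix (Fin n) (Fin n) ℂ) + V * (T⁻¹ - 1) * V.conjTranspose)))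
        1 (fun i => V i j) := by
  have hTdet : IsUnit T.det := (Matrix.isUnit_iff_isUnit_det T).mp hT
  have hTT : T * T⁻¹ = 1 := Matrix.mul_nonsing_inv T hTdet
  have key : A * ((1 : Matrix (Fin n) (Fin n) ℂ) + V * (T⁻¹ - 1) * V.conjTranspose) * V = V := by
    have : ((1 : Matrix (Fin n) (Fin n) ℂ) + V * (T⁻¹ - 1) * V.conjTranspose) * V
        = V * T⁻¹ := by
      rw [Matrix.add_mul, Matrix.mul_assoc (V * (T⁻¹ - 1)), hV, Matrix.mul_one, Matrix.one_mul,
        Matrix.mul_sub, Matrix.mul_one]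
      abel
    rw [Matrix.mul_assoc, this, ← Matrix.mul_assoc, hAV, Matrix.mul_assoc, hTT, Matrix.mul_one]
  refine ⟨key, fun j hj => ?_⟩
  refine ⟨?_, hj⟩
  rw [Module.End.mem_eigenspace_iff]
  funext i
  simp only [Matrix.mulVecLin_apply, Matrix.mulVec, dotProduct, one_smul]
  have := congrFun (congrFun key i) j
  simpa [Matrix.mul_apply] using this
end

section
/- Let A be an n×n complex matrix, V an n×r complex matrix with orthonormal columns (Vᴴ·V = I_r), and T an invertible r×r complex matrix such that A·V = V·T. Define P⁻¹ = I_n + V·(T⁻¹ − I_r)·Vᴴ. Then the spectrum of A·P⁻¹ is contained in {1} ∪ spectrum(A). -/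
theorem spectrum_of_deflated_system (n r : ℕ)
    (A : Matrix (Fin n) (Fin n) ℂ) (V : Matrix (Fin n) (Fin r) ℂ)
    (hV : V.conjTranspose * V = 1)
    (T : Matrix (Fin r) (Fin r) ℂ) (hT : IsUnit T)
    (hAV : A * V = V * T) :
    spectrum ℂ (A * ((1 : Matrix (Fin n) (Fin n) ℂ) + V * (T⁻¹ - 1) * V.conjTranspose))
      ⊆ {1} ∪ spectrum ℂ A := by
  intro μ hμ
  rw [Set.mem_union, Set.mem_singleton_iff]
  by_contra hc
  push_neg at hc
  obtain ⟨h1, hA⟩ := hc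
  rw [spectrum.mem_iff] at hμ
  apply hμ
  rw [spectrum.notMem_iff] at hA
  rw [Algebra.algebraMap_eq_smul_one] at hA ⊢
  set X : Matrix (Fin n) (Fin n) ℂ := μ • 1 - A with hXdef
  set Y : Matrix (Fin r) (Fin r) ℂ := μ • 1 - T with hYdef
  have hXdet : IsUnit X.det := (Matrix.isUnit_iff_isUnit_det X).mp hA
  have hXXi : X * X⁻¹ = 1 := Matrix.mul_nonsing_inv X hXdet
  have hXiX : X⁻¹ * X = 1 := Matrix.nonsing_inv_mul X hXdet
  have hXV : X * V = V * Y := by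
    rw [hXdef, hYdef, Matrix.sub_mul, Matrix.mul_sub, hAV, Matrix.smul_mul,
      Matrix.mul_smul, Matrix.one_mul, Matrix.mul_one]
  -- Y is a unit
  have hYunit : IsUnit Y := by
    have hleft : (V.conjTranspose * X⁻¹ * V) * Y = 1 := by
      rw [Matrix.mul_assoc, ← hXV, Matrix.mul_assoc, ← Matrix.mul_assoc X⁻¹, hXiX,
        Matrix.one_mul, hV]
    exact ⟨⟨Y, V.conjTranspose * X⁻¹ * V, mul_eq_one_comm.mp hleft, hleft⟩, rfl⟩
  have hYdet : IsUnit Y.det := (Matrix.isUnit_iff_isUnit_det Y).mp hYunit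
  have hYYi : Y * Y⁻¹ = 1 := Matrix.mul_nonsing_inv Y hYdet
  have hYiY : Y⁻¹ * Y = 1 := Matrix.nonsing_inv_mul Y hYdet
  have hXiV : X⁻¹ * V = V * Y⁻¹ := by
    have : X⁻¹ * (V * Y) * Y⁻¹ = V * Y⁻¹ := by
      rw [← hXV, ← Matrix.mul_assoc, Matrix.mul_assoc X⁻¹ X, ← Matrix.mul_assoc X⁻¹ X,
        hXiX, Matrix.one_mul]
    rw [← this, Matrix.mul_assoc, Matrix.mul_assoc, hYYi, Matrix.mul_one]
  have hTTi : T * T⁻¹ = 1 := Matrix.mul_nonsing_inv T ((Matrix.isUnit_iff_isUnit_det T).mp hT)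
  -- rewrite the preconditioned matrix
  have hM : A * ((1 : Matrix (Fin n) (Fin n) ℂ) + V * (T⁻¹ - 1) * V.conjTranspose)
      = A + V * (1 - T) * V.conjTranspose := by
    have h2 : T * (T⁻¹ - 1) = 1 - T := by rw [Matrix.mul_sub, hTTi, Matrix.mul_one]
    rw [Matrix.mul_add, Matrix.mul_one, ← Matrix.mul_assoc, ← Matrix.mul_assoc, hAV,
      Matrix.mul_assoc V T, h2]
  -- key factorization
  have hfact : μ • (1 : Matrix (Fin n) (Fin n) ℂ)
      - A * ((1 : Matrix (Fin n) (Fin n) ℂ) + V * (T⁻¹ - 1) * V.conjTranspose)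
      = X * (1 + (V * (-(Y⁻¹ * (1 - T)))) * V.conjTranspose) := by
    have h2 : X * (1 + (V * (-(Y⁻¹ * (1 - T)))) * V.conjTranspose)
        = X - V * (1 - T) * V.conjTranspose := by
      calc X * (1 + V * -(Y⁻¹ * (1 - T)) * V.conjTranspose)
          = X + X * V * -(Y⁻¹ * (1 - T)) * V.conjTranspose := by
            simp only [Matrix.mul_add, Matrix.mul_one, Matrix.mul_assoc]
        _ = X + V * Y * -(Y⁻¹ * (1 - T)) * V.conjTranspose := by rw [hXV]
        _ = X - V * (1 - T) * V.conjTranspose := by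
            have h3 : Y * -(Y⁻¹ * (1 - T)) = -(1 - T) := by
              rw [Matrix.mul_neg, ← Matrix.mul_assoc, hYYi, Matrix.one_mul]
            rw [Matrix.mul_assoc V Y, h3, Matrix.mul_neg, Matrix.neg_mul, ← sub_eq_add_neg]
    rw [h2, hM, hXdef]
    abel
  rw [hfact]
  refine hA.mul ?_
  rw [Matrix.isUnit_iff_isUnit_det, Matrix.det_one_add_mul_comm]
  have hcalc : (1 : Matrix (Fin r) (Fin r) ℂ) + V.conjTranspose * (V * (-(Y⁻¹ * (1 - T))))
      = Y⁻¹ * ((μ - 1) • 1) := by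
    rw [← Matrix.mul_assoc, hV, Matrix.one_mul]
    have hsub : (μ - 1) • (1 : Matrix (Fin r) (Fin r) ℂ) = Y - (1 - T) := by
      rw [hYdef, sub_smul, one_smul]; abel
    rw [hsub]
    conv_rhs => rw [Matrix.mul_sub, hYiY]
    abel
  rw [hcalc, Matrix.det_mul]
  refine ((Matrix.isUnit_nonsing_inv_det Y hYdet).mul ?_)
  rw [Matrix.det_smul, Matrix.det_one, mul_one]
  exact (isUnit_iff_ne_zero.mpr (sub_ne_zero_of_ne h1)).pow _
end
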